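/- arXiv:2207.09768 — 3 statements merged into one kernel-verified Lean document; each statement's English description precedes it below -/
import Mathlib

section
/- Let H_Y and H_A be RKHSs with bounded kernels k_Y and k_A over measurable spaces Ω_Y and Ω_A, and let k = k_Y ⊗ k_A be the tensor product kernel on the RKHS H_Y ⊗ H_A. Suppose k is characteristic, i.e., the map sending a probability measure μ on Ω_Y × Ω_A to its kernel mean embedding ∫ k(·, (y,a)) dμ(y,a) is injective. Let P be a probability measure on Ω_Y × Ω_A with marginals P_Y and P_A. Then the mean embedding of P equals the tensor product of the mean embeddings of P_Y and P_A, i.e., μ_P = μ_{P_Y} ⊗ μ_{P_A}, if and only if P = P_Y ⊗ P_A (i.e., Y and A are independent under P). -/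
open MeasureTheory

/-! By Fubini's theorem for the bilinear map `tm`, the mean embedding of the product of the
marginals of `P` is `tm μ_{P_Y} μ_{P_A}`. The factorisation of `μ_P` therefore says exactly that
`P` and `P_Y ⊗ P_A` have the same mean embedding, and a characteristic kernel separates them. -/

section MarginalEmbedding

variable {α β E F G : Type*} [MeasurableSpace α] [MeasurableSpace β]
  [NormedAddCommGroup E] [NormedSpace ℝ E] [CompleteSpace E]
  [NormedAddCommGroup F] [NormedSpace ℝ F] [CompleteSpace F]
  [NormedAddCommGroup G] [NormedSpace ℝ G] [CompleteSpace G]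

theorem integral_prod_map_fst_map_snd_bilin (B : E →L[ℝ] F →L[ℝ] G) {P : Measure (α × β)}
    [SFinite P] {f : α → E} {g : β → F}
    (hf : Integrable f (P.map Prod.fst)) (hg : Integrable g (P.map Prod.snd)) :
    ∫ z, B (f z.1) (g z.2) ∂(P.map Prod.fst).prod (P.map Prod.snd)
      = B (∫ z, f z.1 ∂P) (∫ z, g z.2 ∂P) := by
  rw [integral_prod_bilin B hf hg, integral_map measurable_fst.aemeasurable hf.1,
    integral_map measurable_snd.aemeasurable hg.1]

end MarginalEmbedding

theorem stmt2_general {ΩY ΩA HY HA H : Type*}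
    [MeasurableSpace ΩY] [MeasurableSpace ΩA]
    [NormedAddCommGroup HY] [InnerProductSpace ℝ HY] [CompleteSpace HY]
    [NormedAddCommGroup HA] [InnerProductSpace ℝ HA] [CompleteSpace HA]
    [NormedAddCommGroup H] [InnerProductSpace ℝ H] [CompleteSpace H]
    (tm : HY →L[ℝ] HA →L[ℝ] H)
    (φY : ΩY → HY) (φA : ΩA → HA)
    (hφYm : StronglyMeasurable φY) (hφAm : StronglyMeasurable φA)
    (CY CA : ℝ) (hbY : ∀ y, ‖φY y‖ ≤ CY) (hbA : ∀ a, ‖φA a‖ ≤ CA)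
    (hchar : ∀ μ ν : Measure (ΩY × ΩA), IsProbabilityMeasure μ → IsProbabilityMeasure ν →
      (∫ p, tm (φY p.1) (φA p.2) ∂μ) = (∫ p, tm (φY p.1) (φA p.2) ∂ν) → μ = ν)
    (P : Measure (ΩY × ΩA)) [IsProbabilityMeasure P] :
    (∫ p, tm (φY p.1) (φA p.2) ∂P)
        = tm (∫ p, φY p.1 ∂P) (∫ p, φA p.2 ∂P)
      ↔ P = (P.map Prod.fst).prod (P.map Prod.snd) := by
  have hprod := integral_prod_map_fst_map_snd_bilin tm (P := P)
    (.of_bound hφYm.aestronglyMeasurable CY (ae_of_all _ hbY))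
    (.of_bound hφAm.aestronglyMeasurable CA (ae_of_all _ hbA))
  constructor
  · intro h
    have := Measure.isProbabilityMeasure_map (μ := P) measurable_fst.aemeasurable
    have := Measure.isProbabilityMeasure_map (μ := P) measurable_snd.aemeasurable
    exact hchar _ _ inferInstance inferInstance (h.trans hprod.symm)
  · intro h
    rw [← hprod, ← h]

/-- Tensor-product kernel mean embeddings: modelling the RKHSs via bounded strongly
measurable feature maps `φY, φA` and the tensor product via a continuous bilinear map `tm`
with `⟪tm f g, tm f' g'⟫ = ⟪f, f'⟫ ⟪g, g'⟫`.  If the tensor product kernel is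
characteristic (the mean-embedding map is injective on probability measures on
`ΩY × ΩA`), then for a probability measure `P` on `ΩY × ΩA`, the embedding of `P`
equals the tensor product of the embeddings of its marginals iff `P` is the product of
its marginals. -/
theorem stmt2 {ΩY ΩA HY HA H : Type*}
    [MeasurableSpace ΩY] [MeasurableSpace ΩA]
    [NormedAddCommGroup HY] [InnerProductSpace ℝ HY] [CompleteSpace HY]
    [NormedAddCommGroup HA] [InnerProductSpace ℝ HA] [CompleteSpace HA]
    [NormedAddCommGroup H] [InnerProductSpace ℝ H] [CompleteSpace H]
    (tm : HY →L[ℝ] HA →L[ℝ] H)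
    (htm : ∀ (f f' : HY) (g g' : HA),
      (inner ℝ (tm f g) (tm f' g') : ℝ) = (inner ℝ f f' : ℝ) * (inner ℝ g g' : ℝ))
    (φY : ΩY → HY) (φA : ΩA → HA)
    (hφYm : StronglyMeasurable φY) (hφAm : StronglyMeasurable φA)
    (CY CA : ℝ) (hbY : ∀ y, ‖φY y‖ ≤ CY) (hbA : ∀ a, ‖φA a‖ ≤ CA)
    (hchar : ∀ μ ν : Measure (ΩY × ΩA), IsProbabilityMeasure μ → IsProbabilityMeasure ν →
      (∫ p, tm (φY p.1) (φA p.2) ∂μ) = (∫ p, tm (φY p.1) (φA p.2) ∂ν) → μ = ν)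
    (P : Measure (ΩY × ΩA)) [IsProbabilityMeasure P] :
    (∫ p, tm (φY p.1) (φA p.2) ∂P)
        = tm (∫ p, φY p.1 ∂P) (∫ p, φA p.2 ∂P)
      ↔ P = (P.map Prod.fst).prod (P.map Prod.snd) :=
  stmt2_general tm φY φA hφYm hφAm CY CA hbY hbA hchar P
end

section
/- Let Y, A, S be random variables on a probability space, with Y and A taking values in measurable spaces carrying RKHSs H_Y and H_A with bounded kernels k_Y and k_A such that the tensor product kernel k_Y ⊗ k_A is characteristic. Define HSCIC(Y, A | S)(ω) := ‖μ_{Y,A | S = S(ω)} − μ_{Y | S = S(ω)} ⊗ μ_{A | S = S(ω)}‖ in the tensor product RKHS, where μ denotes kernel mean embeddings of regular conditional distributions. Then HSCIC(Y, A | S) = 0 almost surely if and only if Y is conditionally independent of A given S. -/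
/-!
Because the embedding of a product measure is the tensor product of the marginal embeddings,
HSCIC at `s` is the distance between the embeddings of the joint conditional law and of the
product of the conditional marginals. As the tensor kernel is characteristic, it vanishes exactly
when these two laws agree. The set of such `s` is measurable, so "a.s. in `ω`" for `S ω` is
"a.e. for the law of `S`".
-/

open MeasureTheory ProbabilityTheory

section

variable {ΩY ΩA HY HA H : Type*} [MeasurableSpace ΩY] [MeasurableSpace ΩA]
    [NormedAddCommGroup HY] [NormedSpace ℝ HY]
    [NormedAddCommGroup HA] [NormedSpace ℝ HA]
    [NormedAddCommGroup H] [NormedSpace ℝ H]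
    (tm : HY →L[ℝ] HA →L[ℝ] H) {φY : ΩY → HY} {φA : ΩA → HA}

theorem norm_integral_sub_tensor_eq_zero_iff
    [CompleteSpace HY] [CompleteSpace HA] [CompleteSpace H]
    (hchar : ∀ μ ν : Measure (ΩY × ΩA), IsProbabilityMeasure μ → IsProbabilityMeasure ν →
      (∫ p, tm (φY p.1) (φA p.2) ∂μ) = (∫ p, tm (φY p.1) (φA p.2) ∂ν) → μ = ν)
    {μ : Measure (ΩY × ΩA)} {ν : Measure ΩY} {ρ : Measure ΩA}
    [IsProbabilityMeasure μ] [IsProbabilityMeasure ν] [IsProbabilityMeasure ρ]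
    (hφY : Integrable φY ν) (hφA : Integrable φA ρ) :
    ‖(∫ p, tm (φY p.1) (φA p.2) ∂μ) - tm (∫ y, φY y ∂ν) (∫ a, φA a ∂ρ)‖ = 0
      ↔ μ = ν.prod ρ := by
  rw [norm_eq_zero, sub_eq_zero, ← integral_prod_bilin tm hφY hφA]
  exact ⟨hchar _ _ inferInstance inferInstance, fun h => h ▸ rfl⟩

theorem stronglyMeasurable_integral_sub_tensor {ΩS : Type*} [MeasurableSpace ΩS]
    (hφY : StronglyMeasurable φY) (hφA : StronglyMeasurable φA)
    (κ : Kernel ΩS (ΩY × ΩA)) (κY : Kernel ΩS ΩY) (κA : Kernel ΩS ΩA) :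
    StronglyMeasurable fun s =>
      (∫ p, tm (φY p.1) (φA p.2) ∂κ s) - tm (∫ y, φY y ∂κY s) (∫ a, φA a ∂κA s) := by
  have hφ : StronglyMeasurable fun p : ΩY × ΩA => tm (φY p.1) (φA p.2) :=
    tm.continuous₂.comp_stronglyMeasurable
      ((hφY.comp_measurable measurable_fst).prodMk (hφA.comp_measurable measurable_snd))
  exact hφ.integral_kernel.sub <| tm.continuous₂.comp_stronglyMeasurable
    (hφY.integral_kernel.prodMk hφA.integral_kernel)

end

theorem stmt3_general {Ω ΩY ΩA ΩS HY HA H : Type*}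
    [MeasurableSpace Ω]
    [MeasurableSpace ΩY] [StandardBorelSpace ΩY] [Nonempty ΩY]
    [MeasurableSpace ΩA] [StandardBorelSpace ΩA] [Nonempty ΩA]
    [MeasurableSpace ΩS]
    [NormedAddCommGroup HY] [InnerProductSpace ℝ HY] [CompleteSpace HY]
    [NormedAddCommGroup HA] [InnerProductSpace ℝ HA] [CompleteSpace HA]
    [NormedAddCommGroup H] [InnerProductSpace ℝ H] [CompleteSpace H]
    (tm : HY →L[ℝ] HA →L[ℝ] H)
    (φY : ΩY → HY) (φA : ΩA → HA)
    (hφYm : StronglyMeasurable φY) (hφAm : StronglyMeasurable φA)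
    (CY CA : ℝ) (hbY : ∀ y, ‖φY y‖ ≤ CY) (hbA : ∀ a, ‖φA a‖ ≤ CA)
    (hchar : ∀ μ ν : Measure (ΩY × ΩA), IsProbabilityMeasure μ → IsProbabilityMeasure ν →
      (∫ p, tm (φY p.1) (φA p.2) ∂μ) = (∫ p, tm (φY p.1) (φA p.2) ∂ν) → μ = ν)
    (P : Measure Ω) [IsProbabilityMeasure P]
    (Y : Ω → ΩY) (A : Ω → ΩA) (S : Ω → ΩS)
    (hS : Measurable S) :
    (∀ᵐ ω ∂P,
        ‖(∫ p, tm (φY p.1) (φA p.2)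
              ∂(condDistrib (fun ω' => (Y ω', A ω')) S P (S ω)))
          - tm (∫ y, φY y ∂(condDistrib Y S P (S ω)))
              (∫ a, φA a ∂(condDistrib A S P (S ω)))‖ = 0)
      ↔ (∀ᵐ s ∂(P.map S),
          condDistrib (fun ω' => (Y ω', A ω')) S P s
            = (condDistrib Y S P s).prod (condDistrib A S P s)) := by
  have hmeas := (stronglyMeasurable_integral_sub_tensor tm hφYm hφAm
    (condDistrib (fun ω' => (Y ω', A ω')) S P) (condDistrib Y S P)
    (condDistrib A S P)).norm.measurable (measurableSet_singleton 0)
  refine (ae_map_iff hS.aemeasurable hmeas).symm.trans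
    (Filter.eventually_congr (.of_forall fun s => ?_))
  exact norm_integral_sub_tensor_eq_zero_iff tm hchar
    (.of_bound hφYm.aestronglyMeasurable CY (.of_forall hbY))
    (.of_bound hφAm.aestronglyMeasurable CA (.of_forall hbA))

/-- HSCIC characterizes conditional independence.  Feature maps `φY, φA` model bounded
kernels with RKHSs `HY, HA`; `tm` models the tensor product; the tensor kernel is assumed
characteristic.  Conditional distributions are the regular conditional distributions
`condDistrib`.  Then `HSCIC(Y, A | S)(ω) := ‖μ_{(Y,A)|S=S ω} − μ_{Y|S=S ω} ⊗ μ_{A|S=S ω}‖`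
vanishes `P`-a.s. iff `Y ⫫ A | S`, i.e. iff the joint conditional distribution factorizes
for `P∘S⁻¹`-a.e. `s`. -/
theorem stmt3 {Ω ΩY ΩA ΩS HY HA H : Type*}
    [MeasurableSpace Ω]
    [MeasurableSpace ΩY] [StandardBorelSpace ΩY] [Nonempty ΩY]
    [MeasurableSpace ΩA] [StandardBorelSpace ΩA] [Nonempty ΩA]
    [MeasurableSpace ΩS]
    [NormedAddCommGroup HY] [InnerProductSpace ℝ HY] [CompleteSpace HY]
    [NormedAddCommGroup HA] [InnerProductSpace ℝ HA] [CompleteSpace HA]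
    [NormedAddCommGroup H] [InnerProductSpace ℝ H] [CompleteSpace H]
    (tm : HY →L[ℝ] HA →L[ℝ] H)
    (htm : ∀ (f f' : HY) (g g' : HA),
      (inner ℝ (tm f g) (tm f' g') : ℝ) = (inner ℝ f f' : ℝ) * (inner ℝ g g' : ℝ))
    (φY : ΩY → HY) (φA : ΩA → HA)
    (hφYm : StronglyMeasurable φY) (hφAm : StronglyMeasurable φA)
    (CY CA : ℝ) (hbY : ∀ y, ‖φY y‖ ≤ CY) (hbA : ∀ a, ‖φA a‖ ≤ CA)
    (hchar : ∀ μ ν : Measure (ΩY × ΩA), IsProbabilityMeasure μ → IsProbabilityMeasure ν →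
      (∫ p, tm (φY p.1) (φA p.2) ∂μ) = (∫ p, tm (φY p.1) (φA p.2) ∂ν) → μ = ν)
    (P : Measure Ω) [IsProbabilityMeasure P]
    (Y : Ω → ΩY) (A : Ω → ΩA) (S : Ω → ΩS)
    (hY : Measurable Y) (hA : Measurable A) (hS : Measurable S) :
    (∀ᵐ ω ∂P,
        ‖(∫ p, tm (φY p.1) (φA p.2)
              ∂(condDistrib (fun ω' => (Y ω', A ω')) S P (S ω)))
          - tm (∫ y, φY y ∂(condDistrib Y S P (S ω)))
              (∫ a, φA a ∂(condDistrib A S P (S ω)))‖ = 0)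
      ↔ (∀ᵐ s ∂(P.map S),
          condDistrib (fun ω' => (Y ω', A ω')) S P s
            = (condDistrib Y S P s).prod (condDistrib A S P s)) :=
  stmt3_general tm φY φA hφYm hφAm CY CA hbY hbA hchar P Y A S hS
end

section
/- Let Y and A be random variables with values in measurable spaces, H_Y and H_A RKHSs with bounded kernels k_Y, k_A, and P the joint law of (Y, A). Then the squared MMD between the joint embedding and the product of marginal embeddings expands as: ‖μ_{Y,A} − μ_Y ⊗ μ_A‖² = E[k_Y(Y,Y')k_A(A,A')] − 2·E[k_Y(Y,Y')k_A(A,A'')] + E[k_Y(Y,Y')]·E[k_A(A,A')], where (Y,A), (Y',A'), (Y'',A'') are i.i.d. copies of the joint pair, and in the middle term A'' is taken from an independent copy (the cross term couples Y with its own A but pairs against independent samples). -/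
open MeasureTheory

theorem inner_integral_integral {α β E : Type*} [MeasurableSpace α] [MeasurableSpace β]
    [NormedAddCommGroup E] [InnerProductSpace ℝ E] [CompleteSpace E]
    {μ : Measure α} {ν : Measure β} [SFinite μ] [SFinite ν] {f : α → E} {g : β → E}
    (hf : Integrable f μ) (hg : Integrable g ν) :
    (inner ℝ (∫ x, f x ∂μ) (∫ y, g y ∂ν) : ℝ) = ∫ z, (inner ℝ (f z.1) (g z.2) : ℝ) ∂μ.prod ν :=
  (integral_prod_bilin (innerSL ℝ) hf hg).symm

/-- Population HSIC expansion: with bounded feature maps `φY, φA` (kernels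
`k_Y(y,y') = ⟪φY y, φY y'⟫`, `k_A(a,a') = ⟪φA a, φA a'⟫`), tensor product `tm`, and `P`
the joint law of `(Y, A)`, the squared MMD between the joint embedding and the product of
the marginal embeddings equals
`E[k_Y(Y,Y')k_A(A,A')] − 2 E[k_Y(Y,Y')k_A(A,A'')] + E[k_Y(Y,Y')]·E[k_A(A,A')]`,
with `(Y,A), (Y',A'), (Y'',A'')` i.i.d. copies of the joint pair. -/
theorem stmt15 {ΩY ΩA HY HA H : Type*}
    [MeasurableSpace ΩY] [MeasurableSpace ΩA]
    [NormedAddCommGroup HY] [InnerProductSpace ℝ HY] [CompleteSpace HY]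
    [NormedAddCommGroup HA] [InnerProductSpace ℝ HA] [CompleteSpace HA]
    [NormedAddCommGroup H] [InnerProductSpace ℝ H] [CompleteSpace H]
    (tm : HY →L[ℝ] HA →L[ℝ] H)
    (htm : ∀ (f f' : HY) (g g' : HA),
      (inner ℝ (tm f g) (tm f' g') : ℝ) = (inner ℝ f f' : ℝ) * (inner ℝ g g' : ℝ))
    (φY : ΩY → HY) (φA : ΩA → HA)
    (hφYm : StronglyMeasurable φY) (hφAm : StronglyMeasurable φA)
    (CY CA : ℝ) (hbY : ∀ y, ‖φY y‖ ≤ CY) (hbA : ∀ a, ‖φA a‖ ≤ CA)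
    (P : Measure (ΩY × ΩA)) [IsProbabilityMeasure P] :
    ‖(∫ p, tm (φY p.1) (φA p.2) ∂P)
        - tm (∫ p, φY p.1 ∂P) (∫ p, φA p.2 ∂P)‖ ^ 2
      = (∫ q, (inner ℝ (φY q.1.1) (φY q.2.1) : ℝ) * (inner ℝ (φA q.1.2) (φA q.2.2) : ℝ)
            ∂(P.prod P))
        - 2 * (∫ q, (inner ℝ (φY q.1.1) (φY q.2.1.1) : ℝ)
                  * (inner ℝ (φA q.1.2) (φA q.2.2.2) : ℝ)
            ∂(P.prod (P.prod P)))
        + (∫ q, (inner ℝ (φY q.1.1) (φY q.2.1) : ℝ) ∂(P.prod P))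
          * (∫ q, (inner ℝ (φA q.1.2) (φA q.2.2) : ℝ) ∂(P.prod P)) := by
  have hY : Integrable (fun p : ΩY × ΩA => φY p.1) P :=
    .of_bound (hφYm.comp_measurable measurable_fst).aestronglyMeasurable CY
      (ae_of_all _ fun p => hbY p.1)
  have hA : Integrable (fun p : ΩY × ΩA => φA p.2) P :=
    .of_bound (hφAm.comp_measurable measurable_snd).aestronglyMeasurable CA
      (ae_of_all _ fun p => hbA p.2)
  have hjoint : Integrable (fun p : ΩY × ΩA => tm (φY p.1) (φA p.2)) P := by
    refine .of_bound (tm.aestronglyMeasurable_comp₂ hY.1 hA.1) (‖tm‖ * CY * CA)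
      (ae_of_all _ fun p => ?_)
    calc ‖tm (φY p.1) (φA p.2)‖ ≤ ‖tm‖ * ‖φY p.1‖ * ‖φA p.2‖ := tm.le_opNorm₂ _ _
      _ ≤ ‖tm‖ * CY * CA := by
        have hCY : 0 ≤ CY := (norm_nonneg _).trans (hbY p.1)
        gcongr
        exacts [hbY _, hbA _]
  have hprod : Integrable (fun q : (ΩY × ΩA) × (ΩY × ΩA) => tm (φY q.1.1) (φA q.2.2))
      (P.prod P) :=
    hY.op_fst_snd (by fun_prop) ⟨‖tm‖, tm.le_opNorm₂⟩ hA
  -- Writing `μ_Y ⊗ μ_A` as an integral over `P ⊗ P` is what pairs `A` with an independent copy.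
  have hcross : tm (∫ p, φY p.1 ∂P) (∫ p, φA p.2 ∂P)
      = ∫ q, tm (φY q.1.1) (φA q.2.2) ∂(P.prod P) :=
    (integral_prod_bilin tm hY hA).symm
  rw [norm_sub_sq_real, ← real_inner_self_eq_norm_sq, ← real_inner_self_eq_norm_sq (tm _ _),
    htm, hcross, inner_integral_integral hjoint hjoint, inner_integral_integral hjoint hprod,
    inner_integral_integral hY hY, inner_integral_integral hA hA]
  simp only [htm]
end
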